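/- arXiv:2512.01112 — 3 statements merged into one kernel-verified Lean document; each statement's English description precedes it below -/
import Mathlib

section
/- Let n ≥ 1, let w₁,…,wₙ > 0 be winner endowments, let caps β₁,…,βₙ ∈ (0,1], and let φ : ℝ → ℝ be continuous, strictly convex, and increasing on [0,1]. Let the budget B satisfy 0 < B < Σᵢ wᵢ·βᵢ. Then there exists a water level η ≥ 0 such that the capped pro-rata haircut vector h*ᵢ = min(η, βᵢ) satisfies Σᵢ wᵢ·h*ᵢ = B, and h* is the unique minimizer of the weighted total disutility Σᵢ wᵢ·φ(hᵢ) over all haircut vectors h with 0 ≤ hᵢ ≤ βᵢ for every i and Σᵢ wᵢ·hᵢ = B. -/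
/-!
The capped pro-rata vector `c i = min η (β i)` satisfies the KKT conditions of the convex
program, with Lagrange multiplier the right derivative `L` of `φ` at the water level `η`:
the tangent line of slope `L` at `c i` lies strictly below `φ` on the feasible interval
`[0, β i]` away from `c i` (at uncapped accounts `c i = η`; at capped ones `c i = β i < η` and
only `h i < c i` is feasible). Summing these tangent inequalities with weights `w i`, the
linear terms cancel because both vectors spend the same budget.
-/

open Set

namespace StrictConvexOn

variable {S : Set ℝ} {φ : ℝ → ℝ} {x y η : ℝ}

lemma slope_lt_rightDeriv_of_le (hφ : StrictConvexOn ℝ S φ) (hη : η ∈ interior S)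
    (hx : x ∈ S) (hxy : x < y) (hyη : y ≤ η) :
    slope φ x y < derivWithin φ (Ioi η) η := by
  have hηS : η ∈ S := interior_subset hη
  have hxη : x < η := hxy.trans_le hyη
  have hyS : y ∈ S := hφ.1.ordConnected.out hx hηS ⟨hxy.le, hyη⟩
  calc slope φ x y ≤ slope φ x η :=
        hφ.convexOn.slope_mono hx ⟨hyS, hxy.ne'⟩ ⟨hηS, hxη.ne'⟩ hyη
    _ < derivWithin φ (Iio η) η :=
        hφ.slope_lt_leftDeriv hx hηS hxη
          (hφ.convexOn.differentiableWithinAt_Iio_of_mem_interior hη)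
    _ ≤ derivWithin φ (Ioi η) η := hφ.convexOn.leftDeriv_le_rightDeriv_of_mem_interior hη

lemma rightDeriv_lt_slope_of_mem_interior (hφ : StrictConvexOn ℝ S φ) (hη : η ∈ interior S)
    (hy : y ∈ S) (hηy : η < y) :
    derivWithin φ (Ioi η) η < slope φ η y :=
  hφ.rightDeriv_lt_slope (interior_subset hη) hy hηy
    (hφ.convexOn.differentiableWithinAt_Ioi_of_mem_interior hη)

end StrictConvexOn

lemma add_mul_sub_lt_of_slope {φ : ℝ → ℝ} {L c x : ℝ} (hxc : x ≠ c)
    (hlt : x < c → slope φ x c < L) (hgt : c < x → L < slope φ c x) :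
    φ c + L * (x - c) < φ x := by
  rcases hxc.lt_or_gt with hx | hx
  · have := hlt hx
    rw [slope_def_field, div_lt_iff₀ (sub_pos.2 hx)] at this
    linarith
  · have := hgt hx
    rw [slope_def_field, lt_div_iff₀ (sub_pos.2 hx)] at this
    linarith

lemma StrictConvexOn.add_rightDeriv_mul_sub_min_lt {φ : ℝ → ℝ}
    (hφ : StrictConvexOn ℝ (Icc 0 1) φ) {η b x : ℝ} (hη : η ∈ Ioo 0 1) (hb : b ≤ 1)
    (hx : x ∈ Icc 0 b) (hxc : x ≠ min η b) :
    φ (min η b) + derivWithin φ (Ioi η) η * (x - min η b) < φ x := by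
  rw [← interior_Icc] at hη
  have hxS : x ∈ Icc (0 : ℝ) 1 := ⟨hx.1, hx.2.trans hb⟩
  refine add_mul_sub_lt_of_slope hxc
    (fun hlt => hφ.slope_lt_rightDeriv_of_le hη hxS hlt (min_le_left _ _)) fun hgt => ?_
  have hηb : η < b := (min_lt_iff.1 (hgt.trans_le hx.2)).resolve_right (lt_irrefl b)
  have hmin : min η b = η := min_eq_left hηb.le
  rw [hmin] at hgt ⊢
  exact hφ.rightDeriv_lt_slope_of_mem_interior hη hxS hgt

lemma Finset.sum_mul_lt_sum_mul_of_tangent {ι : Type*} {s : Finset ι} {w c h : ι → ℝ}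
    {φ : ℝ → ℝ} {L : ℝ} (hw : ∀ i ∈ s, 0 < w i)
    (htangent : ∀ i ∈ s, h i ≠ c i → φ (c i) + L * (h i - c i) < φ (h i))
    (hne : ∃ j ∈ s, h j ≠ c j) (hbudget : ∑ i ∈ s, w i * h i = ∑ i ∈ s, w i * c i) :
    ∑ i ∈ s, w i * φ (c i) < ∑ i ∈ s, w i * φ (h i) := by
  have hle : ∀ i ∈ s, φ (c i) + L * (h i - c i) ≤ φ (h i) := fun i hi => by
    rcases eq_or_ne (h i) (c i) with heq | hneq
    · simp [heq]
    · exact (htangent i hi hneq).le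
  have hlin : ∑ i ∈ s, w i * (φ (c i) + L * (h i - c i)) = ∑ i ∈ s, w i * φ (c i) := by
    simp only [mul_add, Finset.sum_add_distrib, mul_left_comm (w _) L, ← Finset.mul_sum,
      mul_sub, Finset.sum_sub_distrib, hbudget, sub_self, add_zero]
  obtain ⟨j, hj, hjne⟩ := hne
  rw [← hlin]
  exact Finset.sum_lt_sum (fun i hi => mul_le_mul_of_nonneg_left (hle i hi) (hw i hi).le)
    ⟨j, hj, mul_lt_mul_of_pos_left (htangent j hj hjne) (hw j hj)⟩

lemma exists_water_level {ι : Type*} (s : Finset ι) (w β : ι → ℝ) (hβ : ∀ i ∈ s, β i ∈ Ioc 0 1)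
    {B : ℝ} (hB0 : 0 < B) (hB : B < ∑ i ∈ s, w i * β i) :
    ∃ η ∈ Ioo (0 : ℝ) 1, ∑ i ∈ s, w i * min η (β i) = B := by
  have hcont : Continuous fun t : ℝ => ∑ i ∈ s, w i * min t (β i) := by fun_prop
  have hzero : ∑ i ∈ s, w i * min 0 (β i) = 0 :=
    Finset.sum_eq_zero fun i hi => by rw [min_eq_left (hβ i hi).1.le, mul_zero]
  have hone : ∑ i ∈ s, w i * min 1 (β i) = ∑ i ∈ s, w i * β i :=
    Finset.sum_congr rfl fun i hi => by rw [min_eq_right (hβ i hi).2]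
  exact intermediate_value_Ioo zero_le_one hcont.continuousOn <| by
    simp only [mem_Ioo, hzero, hone]
    exact ⟨hB0, hB⟩

theorem stmt_4_general (n : ℕ) (w β : Fin n → ℝ)
    (hw : ∀ i, 0 < w i) (hβ : ∀ i, β i ∈ Set.Ioc (0 : ℝ) 1)
    (φ : ℝ → ℝ)
    (hφconv : StrictConvexOn ℝ (Set.Icc 0 1) φ)
    (B : ℝ) (hB0 : 0 < B) (hBC : B < ∑ i, w i * β i) :
    ∃ η : ℝ, 0 ≤ η ∧
      (∑ i, w i * min η (β i)) = B ∧
      ∀ h : Fin n → ℝ, (∀ i, 0 ≤ h i ∧ h i ≤ β i) →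
        (∑ i, w i * h i) = B →
        h ≠ (fun i => min η (β i)) →
        (∑ i, w i * φ (min η (β i))) < ∑ i, w i * φ (h i) := by
  obtain ⟨η, hη, hηB⟩ := exists_water_level Finset.univ w β (fun i _ => hβ i) hB0 hBC
  refine ⟨η, hη.1.le, hηB, fun h hfeas hbudget hne => ?_⟩
  obtain ⟨j, hj⟩ := Function.ne_iff.mp hne
  exact Finset.sum_mul_lt_sum_mul_of_tangent (fun i _ => hw i)
    (fun i _ => hφconv.add_rightDeriv_mul_sub_min_lt hη (hβ i).2 (hfeas i))
    ⟨j, Finset.mem_univ j, hj⟩ (hbudget.trans hηB.symm)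

/-- **Convex optimality of the capped pro-rata rule.**
For positive endowments `w`, caps `β ∈ (0,1]`, a continuous, strictly convex,
strictly increasing disutility `φ` on `[0,1]`, and interior budget
`0 < B < ∑ w i * β i`, there is a water level `η ≥ 0` such that
`h* i = min η (β i)` is budget-balanced and is the unique minimizer of
`∑ w i * φ (h i)` over feasible budget-balanced haircut vectors. -/
theorem stmt_4 (n : ℕ) (hn : 0 < n) (w β : Fin n → ℝ)
    (hw : ∀ i, 0 < w i) (hβ : ∀ i, β i ∈ Set.Ioc (0 : ℝ) 1)
    (φ : ℝ → ℝ) (hφc : ContinuousOn φ (Set.Icc 0 1))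
    (hφconv : StrictConvexOn ℝ (Set.Icc 0 1) φ)
    (hφmono : StrictMonoOn φ (Set.Icc 0 1))
    (B : ℝ) (hB0 : 0 < B) (hBC : B < ∑ i, w i * β i) :
    ∃ η : ℝ, 0 ≤ η ∧
      (∑ i, w i * min η (β i)) = B ∧
      ∀ h : Fin n → ℝ, (∀ i, 0 ≤ h i ∧ h i ≤ β i) →
        (∑ i, w i * h i) = B →
        h ≠ (fun i => min η (β i)) →
        (∑ i, w i * φ (min η (β i))) < ∑ i, w i * φ (h i) :=
  stmt_4_general n w β hw hβ φ hφconv B hB0 hBC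
end

section
/- Consider two winners with endowments w₁ > w₂ > 0 processed by the queue rule in the order (1, 2) (winner 1 has the strictly higher ranking score), and a budget B with w₁ − w₂ < B ≤ w₁. Then the queue seizes x₁ = B from winner 1 and x₂ = 0 from winner 2, and the post-ADL surviving endowments satisfy w₁ − B < w₂; that is, the queue rule violates monotonicity by reversing the pre-ADL ordering of the two winners (w₁ > w₂ before ADL but survivor of 1 strictly below survivor of 2 after ADL). -/
theorem stmt_7_general (w₁ w₂ B : ℝ) (h2pos : 0 < w₂)
    (hBlo : w₁ - w₂ < B) (hBhi : B ≤ w₁) :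
    min w₁ B = B ∧
    min w₂ (B - min w₁ B) = 0 ∧
    w₁ - min w₁ B < w₂ - min w₂ (B - min w₁ B) := by
  have hx₁ : min w₁ B = B := min_eq_right hBhi
  have hx₂ : min w₂ (B - min w₁ B) = 0 := by rw [hx₁, sub_self, min_eq_right h2pos.le]
  refine ⟨hx₁, hx₂, ?_⟩
  rw [hx₂, hx₁]
  linarith

/-- **Queue monotonicity failure.**
Two winners with endowments `w₁ > w₂ > 0` are processed by the queue in order
`(1, 2)` with budget `w₁ - w₂ < B ≤ w₁`: the queue seizes `x₁ = min w₁ B = B`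
from winner 1 and `x₂ = min w₂ (B - x₁) = 0` from winner 2, and the post-ADL
survivors reverse the pre-ADL ordering: `w₁ - B < w₂`. -/
theorem stmt_7 (w₁ w₂ B : ℝ) (h2pos : 0 < w₂) (h21 : w₂ < w₁)
    (hBlo : w₁ - w₂ < B) (hBhi : B ≤ w₁) :
    min w₁ B = B ∧
    min w₂ (B - min w₁ B) = 0 ∧
    w₁ - min w₁ B < w₂ - min w₂ (B - min w₁ B) :=
  stmt_7_general w₁ w₂ B h2pos hBlo hBhi
end

section
/- Let n ≥ 1, let w₁,…,wₙ > 0, let caps β₁,…,βₙ ∈ (0,1], let risk weights ŵ₁,…,ŵₙ > 0, and let the budget B satisfy 0 ≤ B ≤ Σᵢ wᵢ·βᵢ. Then the map τ ↦ Σᵢ wᵢ·min(βᵢ, τ·ŵᵢ) is continuous and nondecreasing on [0, maxᵢ (βᵢ/ŵᵢ)], and there exists a calibration parameter τ ≥ 0 such that the risk-aware pro-rata haircuts hᵢ = min(βᵢ, τ·ŵᵢ) satisfy 0 ≤ hᵢ ≤ βᵢ for every i and the budget identity Σᵢ wᵢ·hᵢ = B. Moreover, if τ and τ′ are two nonnegative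 solutions, then min(βᵢ, τ·ŵᵢ) = min(βᵢ, τ′·ŵᵢ) for every i, so the allocation is unique. -/
/-!
Each summand `τ ↦ wᵢ · min(βᵢ, τ ŵᵢ)` is continuous and nondecreasing, vanishes at `τ = 0` and
equals `wᵢ βᵢ` once `τ ≥ βᵢ / ŵᵢ`; so the total haircut runs continuously from `0` to the
capacity and the intermediate value theorem calibrates `τ`. For uniqueness, if `τ ≤ τ'` hit the
same budget then every summand at `τ` is below the one at `τ'` while the sums agree, which forces
termwise equality because `wᵢ > 0`.
-/

open Finset

section TotalHaircut

variable {ι : Type*} [Fintype ι] (w β ŵ : ι → ℝ)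

noncomputable def totalHaircut (τ : ℝ) : ℝ := ∑ i, w i * min (β i) (τ * ŵ i)

theorem continuous_totalHaircut : Continuous (totalHaircut w β ŵ) :=
  continuous_finsetSum _ fun _ _ =>
    continuous_const.mul (continuous_const.min (continuous_id.mul continuous_const))

variable {w β ŵ}

theorem haircut_mono {b c τ τ' : ℝ} (hc : 0 ≤ c) (h : τ ≤ τ') :
    min b (τ * c) ≤ min b (τ' * c) :=
  min_le_min le_rfl (mul_le_mul_of_nonneg_right h hc)

theorem monotone_totalHaircut (hw : ∀ i, 0 ≤ w i) (hŵ : ∀ i, 0 ≤ ŵ i) :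
    Monotone (totalHaircut w β ŵ) := fun _ _ h =>
  sum_le_sum fun i _ => mul_le_mul_of_nonneg_left (haircut_mono (hŵ i) h) (hw i)

theorem totalHaircut_zero (hβ : ∀ i, 0 ≤ β i) : totalHaircut w β ŵ 0 = 0 :=
  sum_eq_zero fun i _ => by rw [zero_mul, min_eq_right (hβ i), mul_zero]

theorem totalHaircut_of_ratio_le {τ : ℝ} (hŵ : ∀ i, 0 < ŵ i) (hτ : ∀ i, β i / ŵ i ≤ τ) :
    totalHaircut w β ŵ τ = ∑ i, w i * β i :=
  sum_congr rfl fun i _ => by rw [min_eq_left ((div_le_iff₀ (hŵ i)).mp (hτ i))]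

theorem exists_totalHaircut_eq (hβ : ∀ i, 0 ≤ β i) (hŵ : ∀ i, 0 < ŵ i) {B : ℝ}
    (hB0 : 0 ≤ B) (hBC : B ≤ ∑ i, w i * β i) :
    ∃ τ, 0 ≤ τ ∧ totalHaircut w β ŵ τ = B := by
  have hratio : ∀ i, 0 ≤ β i / ŵ i := fun i => div_nonneg (hβ i) (hŵ i).le
  -- Every cap already binds at the sum of all ratios.
  set T := ∑ i, β i / ŵ i
  have hT : ∀ i, β i / ŵ i ≤ T := fun i =>
    single_le_sum (fun j _ => hratio j) (mem_univ i)
  have hB : B ∈ Set.Icc (totalHaircut w β ŵ 0) (totalHaircut w β ŵ T) := by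
    rw [totalHaircut_zero hβ, totalHaircut_of_ratio_le hŵ hT]
    exact ⟨hB0, hBC⟩
  obtain ⟨τ, hτ, hτB⟩ :=
    intermediate_value_Icc (sum_nonneg fun i _ => hratio i)
      (continuous_totalHaircut w β ŵ).continuousOn hB
  exact ⟨τ, hτ.1, hτB⟩

theorem haircut_eq_of_totalHaircut_eq (hw : ∀ i, 0 < w i) (hŵ : ∀ i, 0 ≤ ŵ i) {τ τ' : ℝ}
    (h : totalHaircut w β ŵ τ = totalHaircut w β ŵ τ') (i : ι) :
    min (β i) (τ * ŵ i) = min (β i) (τ' * ŵ i) := by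
  wlog hle : τ ≤ τ' generalizing τ τ'
  · exact (this h.symm (le_of_not_ge hle)).symm
  have hterm : ∀ j ∈ univ, w j * min (β j) (τ * ŵ j) ≤ w j * min (β j) (τ' * ŵ j) :=
    fun j _ => mul_le_mul_of_nonneg_left (haircut_mono (hŵ j) hle) (hw j).le
  exact mul_left_cancel₀ (hw i).ne' ((sum_eq_sum_iff_of_le hterm).mp h i (mem_univ i))

end TotalHaircut

/-- **Risk-aware pro-rata calibration: existence, monotonicity, continuity,
uniqueness.** For endowments `w > 0`, caps `β ∈ (0,1]`, risk weights `ŵ > 0`,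
and feasible budget `0 ≤ B ≤ ∑ w i * β i`, the map
`τ ↦ ∑ w i * min (β i) (τ * ŵ i)` is continuous and nondecreasing on
`[0, maxᵢ (βᵢ/ŵᵢ)]`, some `τ ≥ 0` yields haircuts `h i = min (β i) (τ * ŵ i)`
with `0 ≤ h i ≤ β i` meeting the budget identity, and any two nonnegative
solutions induce the same allocation. -/
theorem stmt_16 (n : ℕ) (hn : 0 < n) (w β wh : Fin n → ℝ)
    (hw : ∀ i, 0 < w i) (hβ : ∀ i, β i ∈ Set.Ioc (0 : ℝ) 1)
    (hwh : ∀ i, 0 < wh i)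
    (B : ℝ) (hB0 : 0 ≤ B) (hBC : B ≤ ∑ i, w i * β i) :
    haveI : Nonempty (Fin n) := ⟨⟨0, hn⟩⟩
    ContinuousOn (fun τ : ℝ => ∑ i, w i * min (β i) (τ * wh i))
      (Set.Icc 0 (Finset.univ.sup' Finset.univ_nonempty (fun i => β i / wh i))) ∧
    MonotoneOn (fun τ : ℝ => ∑ i, w i * min (β i) (τ * wh i))
      (Set.Icc 0 (Finset.univ.sup' Finset.univ_nonempty (fun i => β i / wh i))) ∧
    (∃ τ : ℝ, 0 ≤ τ ∧
      (∀ i, 0 ≤ min (β i) (τ * wh i) ∧ min (β i) (τ * wh i) ≤ β i) ∧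
      (∑ i, w i * min (β i) (τ * wh i)) = B) ∧
    (∀ τ τ' : ℝ, 0 ≤ τ → 0 ≤ τ' →
      (∑ i, w i * min (β i) (τ * wh i)) = B →
      (∑ i, w i * min (β i) (τ' * wh i)) = B →
      ∀ i, min (β i) (τ * wh i) = min (β i) (τ' * wh i)) := by
  have hβ0 : ∀ i, 0 ≤ β i := fun i => (hβ i).1.le
  have hwh0 : ∀ i, 0 ≤ wh i := fun i => (hwh i).le
  obtain ⟨τ, hτ, hτB⟩ := exists_totalHaircut_eq (w := w) hβ0 hwh hB0 hBC
  refine ⟨(continuous_totalHaircut w β wh).continuousOn,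
    (monotone_totalHaircut (fun i => (hw i).le) hwh0).monotoneOn _,
    ⟨τ, hτ, fun i => ⟨le_min (hβ0 i) (mul_nonneg hτ (hwh0 i)), min_le_left _ _⟩, hτB⟩,
    fun τ τ' _ _ h h' => haircut_eq_of_totalHaircut_eq hw hwh0 (h.trans h'.symm)⟩
end
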